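/- arXiv:2206.13140 — 3 statements merged into one kernel-verified Lean document; each statement's English description precedes it below -/
import Mathlib

section
/- (Bias–variance decomposition of the ensemble risk.) Let z range over a finite set Z with weights q(z) summing to 1, let f_z be strictly positive probability mass functions on a finite set Y, let P be a probability mass function on Y, and define the geometric-mean ensemble q̃(y) = exp(∑_z q(z) log f_z(y)) / C with C = ∑_{y'} exp(∑_z q(z) log f_z(y')). Then ∑_z q(z) E_{y~P}[-log f_z(y)] = D_KL(P ‖ q̃) + ∑_z q(z) D_KL(q̃ ‖ f_z) + H(P). -/
open Real Finset

/-!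
Writing `S y = ∑_z q(z) log f_z(y)`, one has `log q̃ = S - log C`. Hence the bias term is
`-H(P) - E_P[S] + log C`, while for any `r` the averaged divergence `∑_z q(z) D_KL(r ‖ f_z)`
equals `E_r[log r] - E_r[S]`, which for `r = q̃` is `-log C`. The `log C` terms cancel and what
remains, `-E_P[S]`, is the averaged cross-entropy.
-/

theorem mul_log_div_eq_sub (a : ℝ) {b : ℝ} (hb : b ≠ 0) :
    a * log (a / b) = a * log a - a * log b := by
  rcases eq_or_ne a 0 with rfl | ha
  · simp
  · rw [log_div ha hb, mul_sub]

section

variable {Y Z : Type*} [Fintype Y] [Fintype Z]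

theorem sum_mul_sum_mul_comm (q : Z → ℝ) (g : Y → ℝ) (h : Z → Y → ℝ) :
    ∑ z, q z * ∑ y, g y * h z y = ∑ y, g y * ∑ z, q z * h z y := by
  simp only [mul_sum]
  rw [sum_comm]
  exact sum_congr rfl fun _ _ => sum_congr rfl fun _ _ => mul_left_comm _ _ _

theorem sum_mul_sum_mul_log_div {q : Z → ℝ} {f : Z → Y → ℝ} (hq1 : ∑ z, q z = 1)
    (hf : ∀ z y, f z y ≠ 0) (r : Y → ℝ) :
    ∑ z, q z * ∑ y, r y * log (r y / f z y) =
      ∑ y, r y * log (r y) - ∑ y, r y * ∑ z, q z * log (f z y) := by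
  simp only [mul_log_div_eq_sub _ (hf _ _), sum_sub_distrib, mul_sub, ← sum_mul, hq1, one_mul]
  rw [sum_mul_sum_mul_comm]

end

theorem stmt_3_general {Y Z : Type*} [Fintype Y] [Fintype Z] [Nonempty Y]
    (q : Z → ℝ) (f : Z → Y → ℝ) (P : Y → ℝ)
    (hq1 : ∑ z, q z = 1)
    (hf : ∀ z y, 0 < f z y)
    (hP1 : ∑ y, P y = 1)
    (C : ℝ) (hC : C = ∑ y', Real.exp (∑ z, q z * Real.log (f z y')))
    (qt : Y → ℝ) (hqt : ∀ y, qt y = Real.exp (∑ z, q z * Real.log (f z y)) / C) :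
    ∑ z, q z * (∑ y, P y * (-Real.log (f z y))) =
      (∑ y, P y * Real.log (P y / qt y))
        + (∑ z, q z * (∑ y, qt y * Real.log (qt y / f z y)))
        + (-∑ y, P y * Real.log (P y)) := by
  have hC0 : 0 < C := hC ▸ sum_pos (fun _ _ => exp_pos _) univ_nonempty
  have hqt0 : ∀ y, qt y ≠ 0 := fun y => by rw [hqt]; positivity
  have hqt1 : ∑ y, qt y = 1 := by simp only [hqt, ← sum_div, ← hC, div_self hC0.ne']
  have hlog_qt (p : Y → ℝ) (hp1 : ∑ y, p y = 1) :
      ∑ y, p y * log (qt y) = ∑ y, p y * ∑ z, q z * log (f z y) - log C := by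
    simp only [hqt, log_div (exp_ne_zero _) hC0.ne', log_exp, mul_sub, sum_sub_distrib,
      ← sum_mul, hp1, one_mul]
  have hcross : ∑ z, q z * ∑ y, P y * -log (f z y) = -∑ y, P y * ∑ z, q z * log (f z y) := by
    simp only [mul_neg, sum_neg_distrib]
    rw [sum_mul_sum_mul_comm]
  rw [hcross, sum_mul_sum_mul_log_div hq1 (fun z y => (hf z y).ne'), hlog_qt qt hqt1]
  simp only [mul_log_div_eq_sub _ (hqt0 _), sum_sub_distrib, hlog_qt P hP1]
  ring

/-- Bias–variance decomposition of the ensemble risk: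
`∑_z q(z) E_{y~P}[-log f_z(y)] = D_KL(P‖q̃) + ∑_z q(z) D_KL(q̃‖f_z) + H(P)`,
where `q̃(y) = exp(∑_z q(z) log f_z(y)) / C` is the geometric-mean ensemble. -/
theorem stmt_3 {Y Z : Type*} [Fintype Y] [Fintype Z] [Nonempty Y]
    (q : Z → ℝ) (f : Z → Y → ℝ) (P : Y → ℝ)
    (hq : ∀ z, 0 ≤ q z) (hq1 : ∑ z, q z = 1)
    (hf : ∀ z y, 0 < f z y) (hf1 : ∀ z, ∑ y, f z y = 1)
    (hP : ∀ y, 0 < P y) (hP1 : ∑ y, P y = 1)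
    (C : ℝ) (hC : C = ∑ y', Real.exp (∑ z, q z * Real.log (f z y')))
    (qt : Y → ℝ) (hqt : ∀ y, qt y = Real.exp (∑ z, q z * Real.log (f z y)) / C) :
    ∑ z, q z * (∑ y, P y * (-Real.log (f z y))) =
      (∑ y, P y * Real.log (P y / qt y))
        + (∑ z, q z * (∑ y, qt y * Real.log (qt y / f z y)))
        + (-∑ y, P y * Real.log (P y)) :=
  stmt_3_general q f P hq1 hf hP1 C hC qt hqt
end

section
/- (Bias–variance decomposition with noise averaging, Lemma for Theorem 1.) Let ε range over a finite set E with probability weights π(ε), let P_ε be probability mass functions on a finite set Y with mixture P̄ = ∑_ε π(ε) P_ε, let z range over a finite set Z with weights q(z), let f_z be strictly positive pmfs on Y, and let q̃(y) ∝ exp(∑_z q(z) log f_z(y)). Then ∑_ε π(ε) ∑_z q(z) D_KL(P_ε ‖ f_z) = D_KL(P̄ ‖ q̃) + ∑_z q(z) D_KL(q̃ ‖ f_z) + I, where I = ∑_ε π(ε) D_KL(P_ε ‖ P̄) is the mutual information between Y and ε. -/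
/-!
Write `q̃ = exp S / C` with `S = ∑_z q(z) log f_z`. For every pmf `P`, the cross entropies
`-∑_y P log f_z` average over `z` to `-∑_y P S = -∑_y P log q̃ - log C`, and `log C` is exactly
`-∑_z q(z) D_KL(q̃ ‖ f_z)`; hence `∑_z q(z) D_KL(P ‖ f_z) = D_KL(P ‖ q̃) + ∑_z q(z) D_KL(q̃ ‖ f_z)`.
Averaging this over `ε` and splitting `log (P_ε / q̃) = log (P_ε / P̄) + log (P̄ / q̃)`
(the compensation identity for the mixture `P̄`) gives the decomposition.
-/

open Real Finset

noncomputable section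

def discreteKL {α : Type*} [Fintype α] (P Q : α → ℝ) : ℝ :=
  ∑ a, P a * log (P a / Q a)

/-- The normalized weighted geometric mean `q̃ ∝ exp (∑_z q(z) log f_z)` of the `f_z`. -/
def geomMixture {Y Z : Type*} [Fintype Y] [Fintype Z] (q : Z → ℝ) (f : Z → Y → ℝ)
    (y : Y) : ℝ :=
  exp (∑ z, q z * log (f z y)) / ∑ y', exp (∑ z, q z * log (f z y'))

end

lemma mul_log_div_eq_sub_s5 (x : ℝ) {y : ℝ} (hy : y ≠ 0) :
    x * log (x / y) = x * log x - x * log y := by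
  rcases eq_or_ne x 0 with rfl | hx
  · simp
  · rw [log_div hx hy, mul_sub]

lemma sum_mul_sum_mul_comm_s5 {ι κ : Type*} [Fintype ι] [Fintype κ] (a : ι → ℝ) (b : κ → ℝ)
    (c : ι → κ → ℝ) :
    ∑ i, a i * ∑ k, b k * c i k = ∑ k, b k * ∑ i, a i * c i k := by
  simp only [mul_sum]
  rw [sum_comm]
  exact sum_congr rfl fun _ _ => sum_congr rfl fun _ _ => mul_left_comm _ _ _

lemma mixture_pos {α ι : Type*} [Fintype ι] {w : ι → ℝ} {P : ι → α → ℝ}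
    (hw : ∀ i, 0 ≤ w i) (hw1 : ∑ i, w i = 1) (hP : ∀ i a, 0 < P i a) (a : α) :
    0 < ∑ i, w i * P i a := by
  obtain ⟨i, -, hi⟩ := exists_lt_of_sum_lt (by simp [hw1] : ∑ _ : ι, (0 : ℝ) < ∑ i, w i)
  exact sum_pos' (fun j _ => mul_nonneg (hw j) (hP j a).le) ⟨i, mem_univ i, mul_pos hi (hP i a)⟩

section discreteKL

variable {α : Type*} [Fintype α]

lemma discreteKL_eq_sub {P Q : α → ℝ} (hQ : ∀ a, Q a ≠ 0) :
    discreteKL P Q = ∑ a, P a * log (P a) - ∑ a, P a * log (Q a) := by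
  simp only [discreteKL, mul_log_div_eq_sub_s5 _ (hQ _), sum_sub_distrib]

/-- The compensation identity. -/
lemma sum_mul_discreteKL_eq_mixture_add {ι : Type*} [Fintype ι] (w : ι → ℝ) (P : ι → α → ℝ)
    {Q : α → ℝ} (hQ : ∀ a, Q a ≠ 0) (hPbar : ∀ a, ∑ i, w i * P i a ≠ 0) :
    ∑ i, w i * discreteKL (P i) Q =
      discreteKL (fun a => ∑ i, w i * P i a) Q
        + ∑ i, w i * discreteKL (P i) (fun a => ∑ i, w i * P i a) := by
  have hswap : ∀ c : α → ℝ, ∑ i, w i * ∑ a, P i a * c a = ∑ a, (∑ i, w i * P i a) * c a :=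
    fun c => by simp only [mul_sum, sum_mul, mul_assoc]; exact sum_comm
  simp only [discreteKL_eq_sub hQ, discreteKL_eq_sub hPbar, mul_sub, sum_sub_distrib, hswap]
  ring

end discreteKL

section geomMixture

variable {Y Z : Type*} [Fintype Y] [Fintype Z] (q : Z → ℝ) (f : Z → Y → ℝ)

lemma geomMixture_pos (y : Y) : 0 < geomMixture q f y :=
  div_pos (exp_pos _) (sum_pos (fun _ _ => exp_pos _) ⟨y, mem_univ y⟩)

lemma log_geomMixture (y : Y) :
    log (geomMixture q f y) =
      ∑ z, q z * log (f z y) - log (∑ y', exp (∑ z, q z * log (f z y'))) := by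
  have hC : ∑ y', exp (∑ z, q z * log (f z y')) ≠ 0 :=
    (sum_pos (fun _ _ => exp_pos _) ⟨y, mem_univ y⟩).ne'
  rw [geomMixture, log_div (exp_ne_zero _) hC, log_exp]

lemma sum_geomMixture [Nonempty Y] : ∑ y, geomMixture q f y = 1 := by
  simp only [geomMixture, ← sum_div]
  exact div_self (sum_pos (fun _ _ => exp_pos _) univ_nonempty).ne'

lemma sum_mul_discreteKL_eq_geomMixture_add [Nonempty Y] (hq1 : ∑ z, q z = 1)
    (hf : ∀ z y, f z y ≠ 0) {P : Y → ℝ} (hP1 : ∑ y, P y = 1) :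
    ∑ z, q z * discreteKL P (f z) =
      discreteKL P (geomMixture q f) + ∑ z, q z * discreteKL (geomMixture q f) (f z) := by
  have hg := fun y => (geomMixture_pos q f y).ne'
  have hS : ∀ g : Y → ℝ,
      ∑ z, q z * ∑ y, g y * log (f z y) = ∑ y, g y * ∑ z, q z * log (f z y) :=
    fun g => sum_mul_sum_mul_comm_s5 q g fun z y => log (f z y)
  simp only [discreteKL_eq_sub (hf _), discreteKL_eq_sub hg, log_geomMixture, mul_sub,
    sum_sub_distrib, hS, ← sum_mul, hq1, hP1, sum_geomMixture, one_mul]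
  ring

end geomMixture

theorem stmt_5_general {Y Z E : Type*} [Fintype Y] [Fintype Z] [Fintype E] [Nonempty Y]
    (pi : E → ℝ) (Pd : E → Y → ℝ) (q : Z → ℝ) (f : Z → Y → ℝ)
    (hpi : ∀ e, 0 ≤ pi e) (hpi1 : ∑ e, pi e = 1)
    (hPd : ∀ e y, 0 < Pd e y) (hPd1 : ∀ e, ∑ y, Pd e y = 1)
    (hq1 : ∑ z, q z = 1)
    (hf : ∀ z y, 0 < f z y)
    (Pbar : Y → ℝ) (hPbar : ∀ y, Pbar y = ∑ e, pi e * Pd e y)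
    (qt : Y → ℝ)
    (hqt : ∀ y, qt y = Real.exp (∑ z, q z * Real.log (f z y)) /
      ∑ y', Real.exp (∑ z, q z * Real.log (f z y'))) :
    ∑ e, pi e * (∑ z, q z * (∑ y, Pd e y * Real.log (Pd e y / f z y))) =
      (∑ y, Pbar y * Real.log (Pbar y / qt y))
        + (∑ z, q z * (∑ y, qt y * Real.log (qt y / f z y)))
        + (∑ e, pi e * (∑ y, Pd e y * Real.log (Pd e y / Pbar y))) := by
  obtain rfl : Pbar = fun y => ∑ e, pi e * Pd e y := funext hPbar
  obtain rfl : qt = geomMixture q f := funext hqt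
  have hf0 : ∀ z y, f z y ≠ 0 := fun z y => (hf z y).ne'
  change ∑ e, pi e * ∑ z, q z * discreteKL (Pd e) (f z) =
    discreteKL _ (geomMixture q f) + ∑ z, q z * discreteKL (geomMixture q f) (f z)
      + ∑ e, pi e * discreteKL (Pd e) _
  simp only [sum_mul_discreteKL_eq_geomMixture_add q f hq1 hf0 (hPd1 _), mul_add, sum_add_distrib,
    ← sum_mul, hpi1, one_mul]
  rw [sum_mul_discreteKL_eq_mixture_add pi Pd (fun y => (geomMixture_pos q f y).ne')
    fun y => (mixture_pos hpi hpi1 hPd y).ne']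
  ring

/-- Bias–variance decomposition with noise averaging (Lemma for Theorem 1):
`∑_ε pi(ε) ∑_z q(z) D_KL(P_ε‖f_z)
  = D_KL(P̄‖q̃) + ∑_z q(z) D_KL(q̃‖f_z) + ∑_ε pi(ε) D_KL(P_ε‖P̄)`. -/
theorem stmt_5 {Y Z E : Type*} [Fintype Y] [Fintype Z] [Fintype E] [Nonempty Y]
    (pi : E → ℝ) (Pd : E → Y → ℝ) (q : Z → ℝ) (f : Z → Y → ℝ)
    (hpi : ∀ e, 0 ≤ pi e) (hpi1 : ∑ e, pi e = 1)
    (hPd : ∀ e y, 0 < Pd e y) (hPd1 : ∀ e, ∑ y, Pd e y = 1)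
    (hq : ∀ z, 0 ≤ q z) (hq1 : ∑ z, q z = 1)
    (hf : ∀ z y, 0 < f z y) (hf1 : ∀ z, ∑ y, f z y = 1)
    (Pbar : Y → ℝ) (hPbar : ∀ y, Pbar y = ∑ e, pi e * Pd e y)
    (qt : Y → ℝ)
    (hqt : ∀ y, qt y = Real.exp (∑ z, q z * Real.log (f z y)) /
      ∑ y', Real.exp (∑ z, q z * Real.log (f z y'))) :
    ∑ e, pi e * (∑ z, q z * (∑ y, Pd e y * Real.log (Pd e y / f z y))) =
      (∑ y, Pbar y * Real.log (Pbar y / qt y))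
        + (∑ z, q z * (∑ y, qt y * Real.log (qt y / f z y)))
        + (∑ e, pi e * (∑ y, Pd e y * Real.log (Pd e y / Pbar y))) :=
  stmt_5_general pi Pd q f hpi hpi1 hPd hPd1 hq1 hf Pbar hPbar qt hqt
end

section
/- (Nested Dropout information ordering, Theorem 2 part (ii).) Let Y and Z̃_1,...,Z̃_K be jointly distributed finite random variables with exchangeable (Y, Z̃)-law as above, let ε_1,...,ε_{K-1} be auxiliary independent 0/1 variables (independent of (Y, Z̃)) defined recursively by ε_0 = 1, ε_i = Bernoulli(η_i) if ε_{i-1}=1 and ε_i = 0 otherwise, and define Z_1 = Z̃_1 and Z_k = (∏_{j=1}^{k-1} ε_j) Z̃_k for k ≥ 2 (with 0 a designated masking value). Then I(Y; Z_1) ≥ I(Y; Z_2) ≥ ... ≥ I(Y; Z_K). -/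
open Real Finset
open scoped Classical

noncomputable section

/-- Joint pmf of `(U, V)` under a pmf `P` on a finite sample space `Ω`. -/
def jointP {Ω α β : Type*} [Fintype Ω] (P : Ω → ℝ) (U : Ω → α) (V : Ω → β)
    (u : α) (v : β) : ℝ :=
  ∑ ω, if U ω = u ∧ V ω = v then P ω else 0

/-- Mutual information `I(U;V)` for a finite-valued `U` and a real-valued `V`
(summing over the finite image of `V`). -/
def MIr {Ω α : Type*} [Fintype Ω] [Fintype α] (P : Ω → ℝ) (U : Ω → α)
    (V : Ω → ℝ) : ℝ :=
  ∑ u, ∑ v ∈ Finset.image V Finset.univ, jointP P U V u v *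
    Real.log (jointP P U V u v /
      ((∑ v' ∈ Finset.image V Finset.univ, jointP P U V u v') *
        (∑ u', jointP P U V u' v)))

/-! Off the masking value `0`, the event `Z_m = z` is `{ε_1 = ⋯ = ε_{m-1} = 1, Z̃_m = z}`.
Independence of the masks from `(Y, Z̃)` and exchangeability of `Z̃_k, Z̃_{k+1}` then give
`P(Y = y, Z_{k+1} = z) = θ · P(Y = y, Z_k = z)` for every `z ≠ 0`, where `θ ≤ 1` is the ratio of
the probabilities that the first `k`, resp. `k - 1`, masks are on. So `Z_{k+1}` is distributed,
jointly with `Y`, as `Z_k` sent through a channel that erases it to `0` with probability `1 - θ`.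
By the log-sum inequality every term of `I(Y; Z_{k+1})` is at most `θ` times the corresponding
term of `I(Y; Z_k)`, and `I(Y; Z_k) ≥ 0` by Gibbs' inequality. -/

section Events

variable {Ω : Type*} [Fintype Ω] (P : Ω → ℝ)

def probOf (A : Ω → Prop) : ℝ := ∑ ω, if A ω then P ω else 0

theorem probOf_congr {A B : Ω → Prop} (h : ∀ ω, A ω ↔ B ω) : probOf P A = probOf P B := by
  rw [show A = B from funext fun ω => propext (h ω)]

theorem probOf_eq_zero {A : Ω → Prop} (h : ∀ ω, ¬ A ω) : probOf P A = 0 := by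
  simp [probOf, h]

theorem probOf_true : probOf P (fun _ => True) = ∑ ω, P ω := by
  simp [probOf]

variable {P}

theorem probOf_nonneg (hP : ∀ ω, 0 ≤ P ω) (A : Ω → Prop) : 0 ≤ probOf P A :=
  sum_nonneg fun ω _ => ite_nonneg (hP ω) le_rfl

theorem probOf_mono (hP : ∀ ω, 0 ≤ P ω) {A B : Ω → Prop} (h : ∀ ω, A ω → B ω) :
    probOf P A ≤ probOf P B :=
  sum_le_sum fun ω _ => by
    split_ifs with hA hB hB
    · rfl
    · exact absurd (h ω hA) hB
    · exact hP ω
    · rfl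

variable (P)

theorem sum_probOf_and_eq {β : Type*} {X : Ω → β} {S : Finset β} (hX : ∀ ω, X ω ∈ S)
    (A : Ω → Prop) : ∑ e ∈ S, probOf P (fun ω => A ω ∧ X ω = e) = probOf P A := by
  unfold probOf
  rw [sum_comm]
  refine sum_congr rfl fun ω _ => ?_
  by_cases hA : A ω <;> simp [hA, hX]

theorem probOf_and_comp_eq_sum {β : Type*} {X : Ω → β} {S : Finset β} (hX : ∀ ω, X ω ∈ S)
    (A : Ω → Prop) (Q : β → Prop) :
    probOf P (fun ω => A ω ∧ Q (X ω)) =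
      ∑ e ∈ S, if Q e then probOf P (fun ω => A ω ∧ X ω = e) else 0 := by
  rw [← sum_probOf_and_eq P hX]
  refine sum_congr rfl fun e _ => ?_
  split_ifs with hQ
  · exact probOf_congr P fun ω => by
      constructor
      · rintro ⟨⟨hA, -⟩, rfl⟩; exact ⟨hA, rfl⟩
      · rintro ⟨hA, rfl⟩; exact ⟨⟨hA, hQ⟩, rfl⟩
  · exact probOf_eq_zero P fun ω ⟨⟨_, hQX⟩, hX⟩ => hQ (hX ▸ hQX)

theorem probOf_and_comp_eq_mul {β : Type*} {X X' : Ω → β} {A B : Ω → Prop} {c : ℝ}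
    (h : ∀ e, probOf P (fun ω => A ω ∧ X ω = e) = c * probOf P (fun ω => B ω ∧ X' ω = e))
    (Q : β → Prop) :
    probOf P (fun ω => A ω ∧ Q (X ω)) = c * probOf P (fun ω => B ω ∧ Q (X' ω)) := by
  have hS : ∀ ω, X ω ∈ image X univ ∪ image X' univ := fun ω => by simp
  have hS' : ∀ ω, X' ω ∈ image X univ ∪ image X' univ := fun ω => by simp
  rw [probOf_and_comp_eq_sum P hS, probOf_and_comp_eq_sum P hS', mul_sum]
  refine sum_congr rfl fun e _ => ?_
  split_ifs
  · exact h e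
  · rw [mul_zero]

theorem probOf_comp_and_comp_eq_mul {β γ : Type*} {X : Ω → β} {W : Ω → γ} {A : Ω → Prop}
    (h : ∀ e v, probOf P (fun ω => X ω = e ∧ A ω ∧ W ω = v) =
      probOf P (fun ω => X ω = e) * probOf P (fun ω => A ω ∧ W ω = v))
    (Q : β → Prop) (R : γ → Prop) :
    probOf P (fun ω => Q (X ω) ∧ A ω ∧ R (W ω)) =
      probOf P (fun ω => Q (X ω)) * probOf P (fun ω => A ω ∧ R (W ω)) := by
  have hQ : ∀ v, probOf P (fun ω => (A ω ∧ W ω = v) ∧ Q (X ω)) =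
      probOf P (fun ω => A ω ∧ W ω = v) * probOf P (fun ω => True ∧ Q (X ω)) := by
    refine fun v => probOf_and_comp_eq_mul P (fun e => ?_) Q
    simp only [true_and]
    rw [mul_comm, ← h e v]
    exact probOf_congr P fun ω => by tauto
  simp only [true_and] at hQ
  calc probOf P (fun ω => Q (X ω) ∧ A ω ∧ R (W ω))
      = probOf P (fun ω => (Q (X ω) ∧ A ω) ∧ R (W ω)) := probOf_congr P fun ω => and_assoc.symm
    _ = probOf P (fun ω => Q (X ω)) * probOf P (fun ω => A ω ∧ R (W ω)) := by
      refine probOf_and_comp_eq_mul P (fun v => ?_) R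
      rw [mul_comm, ← hQ v]
      exact probOf_congr P fun ω => by tauto

end Events

theorem sub_le_mul_log_div {a b : ℝ} (ha : 0 ≤ a) (hb : 0 ≤ b) (hab : b = 0 → a = 0) :
    a - b ≤ a * log (a / b) := by
  rcases ha.eq_or_lt with rfl | ha
  · simpa using hb
  have hb : 0 < b := hb.lt_of_ne fun h => ha.ne' (hab h.symm)
  have h := one_sub_inv_le_log_of_pos (div_pos ha hb)
  rw [inv_div] at h
  calc a - b = a * (1 - b / a) := by field_simp
    _ ≤ a * log (a / b) := mul_le_mul_of_nonneg_left h ha.le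

theorem mul_log_div_mul_left (c a b : ℝ) :
    c * a * log (c * a / (c * b)) = c * (a * log (a / b)) := by
  rcases eq_or_ne c 0 with rfl | hc
  · simp
  · rw [mul_div_mul_left a b hc, mul_assoc]

theorem add_mul_log_div_add_le {a b a' b' : ℝ} (ha : 0 ≤ a) (hb : 0 ≤ b) (ha' : 0 ≤ a')
    (hb' : 0 ≤ b') (hab : b = 0 → a = 0) (hab' : b' = 0 → a' = 0) :
    (a + a') * log ((a + a') / (b + b')) ≤ a * log (a / b) + a' * log (a' / b') := by
  rcases hb.eq_or_lt with rfl | hb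
  · simp [hab rfl]
  rcases hb'.eq_or_lt with rfl | hb'
  · simp [hab' rfl]
  -- Jensen for `x ↦ x log x` at `a / b`, `a' / b'` with weights `b / (b + b')`, `b' / (b + b')`
  have hbb' : 0 < b + b' := add_pos hb hb'
  have h := convexOn_mul_log.2 (Set.mem_Ici.2 (div_nonneg ha hb.le))
    (Set.mem_Ici.2 (div_nonneg ha' hb'.le)) (div_nonneg hb.le hbb'.le)
    (div_nonneg hb'.le hbb'.le) (by field_simp)
  have hmix : b / (b + b') * (a / b) + b' / (b + b') * (a' / b') = (a + a') / (b + b') := by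
    field_simp
  simp only [smul_eq_mul, hmix] at h
  have := mul_le_mul_of_nonneg_left h hbb'.le
  calc (a + a') * log ((a + a') / (b + b'))
      = (b + b') * ((a + a') / (b + b') * log ((a + a') / (b + b'))) := by field_simp
    _ ≤ _ := this
    _ = a * log (a / b) + a' * log (a' / b') := by field_simp

section MutualInformation

variable {α γ : Type*} [Fintype α]

def mutualInfoOn (T : Finset γ) (p : α → γ → ℝ) : ℝ :=
  ∑ u, ∑ z ∈ T, p u z * log (p u z / ((∑ z' ∈ T, p u z') * ∑ u', p u' z))

theorem mutualInfoOn_of_subset {T T' : Finset γ} (hT : T ⊆ T') {p : α → γ → ℝ}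
    (hp : ∀ u, ∀ z ∈ T', z ∉ T → p u z = 0) : mutualInfoOn T p = mutualInfoOn T' p := by
  unfold mutualInfoOn
  refine sum_congr rfl fun u _ => ?_
  rw [sum_subset hT (fun z hz hzT => hp u z hz hzT)]
  exact sum_subset hT fun z hz hzT => by rw [hp u z hz hzT, zero_mul]

theorem eq_zero_of_sum_mul_sum_eq_zero {T : Finset γ} {p : α → γ → ℝ} (hp : ∀ u z, 0 ≤ p u z)
    {u : α} {z : γ} (hz : z ∈ T) (h : (∑ z' ∈ T, p u z') * ∑ u', p u' z = 0) : p u z = 0 := by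
  refine le_antisymm ?_ (hp u z)
  rcases mul_eq_zero.1 h with h | h
  · exact h ▸ single_le_sum (fun z _ => hp u z) hz
  · exact h ▸ single_le_sum (fun u _ => hp u z) (mem_univ u)

theorem mutualInfoOn_nonneg {T : Finset γ} {p : α → γ → ℝ} (hp : ∀ u z, 0 ≤ p u z)
    (hp1 : ∑ u, ∑ z ∈ T, p u z = 1) : 0 ≤ mutualInfoOn T p := by
  have hprod : ∑ u, ∑ z ∈ T, (∑ z' ∈ T, p u z') * ∑ u', p u' z = 1 := by
    rw [← sum_mul_sum, sum_comm (s := T), hp1, one_mul]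
  calc (0 : ℝ) = ∑ u, ∑ z ∈ T, (p u z - (∑ z' ∈ T, p u z') * ∑ u', p u' z) := by
        simp only [sum_sub_distrib, hp1, hprod, sub_self]
    _ ≤ mutualInfoOn T p := sum_le_sum fun u _ => sum_le_sum fun z hz =>
        sub_le_mul_log_div (hp u z) (mul_nonneg (sum_nonneg fun _ _ => hp u _)
          (sum_nonneg fun _ _ => hp _ z)) (eq_zero_of_sum_mul_sum_eq_zero hp hz)

/-- `q` is the law obtained from `p` by keeping the second coordinate with probability `θ` and
erasing it to `z₀` otherwise. -/
theorem mutualInfoOn_erase_le [DecidableEq γ] {T : Finset γ} {z₀ : γ} (hz₀ : z₀ ∈ T)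
    {p q : α → γ → ℝ} (hp : ∀ u z, 0 ≤ p u z) (hp1 : ∑ u, ∑ z ∈ T, p u z = 1)
    {θ : ℝ} (hθ0 : 0 ≤ θ) (hθ1 : θ ≤ 1)
    (hq : ∀ u, ∀ z ∈ T, q u z = θ * p u z + (1 - θ) * if z = z₀ then ∑ z' ∈ T, p u z' else 0) :
    mutualInfoOn T q ≤ mutualInfoOn T p := by
  have hrow : ∀ u, ∑ z ∈ T, q u z = ∑ z ∈ T, p u z := fun u => by
    rw [sum_congr rfl (hq u), sum_add_distrib, ← mul_sum, ← mul_sum, sum_ite_eq' T z₀, if_pos hz₀]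
    ring
  have hcol : ∀ z ∈ T, ∑ u, q u z = θ * ∑ u, p u z + (1 - θ) * if z = z₀ then 1 else 0 :=
    fun z hz => by
      rw [sum_congr rfl fun u _ => hq u z hz, sum_add_distrib, ← mul_sum, ← mul_sum]
      split_ifs <;> simp [hp1]
  have hterm : ∀ u, ∀ z ∈ T, q u z * log (q u z / ((∑ z' ∈ T, q u z') * ∑ u', q u' z)) ≤
      θ * (p u z * log (p u z / ((∑ z' ∈ T, p u z') * ∑ u', p u' z))) := fun u z hz => by
    set w := ∑ z' ∈ T, p u z'
    set c := (1 - θ) * if z = z₀ then w else 0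
    have hw : 0 ≤ w := sum_nonneg fun _ _ => hp u _
    have hc : 0 ≤ c := mul_nonneg (by linarith) (by split_ifs <;> simp [hw])
    have hden : w * (θ * ∑ u', p u' z + (1 - θ) * if z = z₀ then 1 else 0) =
        θ * (w * ∑ u', p u' z) + c := by
      simp only [c]; split_ifs <;> ring
    rw [hrow, hq u z hz, hcol z hz, hden, ← mul_log_div_mul_left]
    calc (θ * p u z + c) * log ((θ * p u z + c) / (θ * (w * ∑ u', p u' z) + c))
        ≤ θ * p u z * log (θ * p u z / (θ * (w * ∑ u', p u' z))) + c * log (c / c) :=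
          add_mul_log_div_add_le (mul_nonneg hθ0 (hp u z))
            (mul_nonneg hθ0 (mul_nonneg hw (sum_nonneg fun _ _ => hp _ z))) hc hc
            (fun h => by
              rcases mul_eq_zero.1 h with h | h
              · rw [h, zero_mul]
              · rw [eq_zero_of_sum_mul_sum_eq_zero hp hz h, mul_zero]) id
      _ = θ * p u z * log (θ * p u z / (θ * (w * ∑ u', p u' z))) := by
          rcases eq_or_ne c 0 with h | h <;> simp [h]
  calc mutualInfoOn T q
      ≤ ∑ u, ∑ z ∈ T, θ * (p u z * log (p u z / ((∑ z' ∈ T, p u z') * ∑ u', p u' z))) :=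
        sum_le_sum fun u _ => sum_le_sum fun z hz => hterm u z hz
    _ = θ * mutualInfoOn T p := by simp only [mutualInfoOn, mul_sum]
    _ ≤ mutualInfoOn T p := mul_le_of_le_one_left (mutualInfoOn_nonneg hp hp1) hθ1

end MutualInformation

section JointLaw

variable {Ω α β : Type*} [Fintype Ω]

theorem jointP_eq_probOf (P : Ω → ℝ) (U : Ω → α) (V : Ω → β) (u : α) (v : β) :
    jointP P U V u v = probOf P (fun ω => U ω = u ∧ V ω = v) := by
  unfold jointP probOf
  congr!

theorem jointP_nonneg {P : Ω → ℝ} (hP : ∀ ω, 0 ≤ P ω) (U : Ω → α) (V : Ω → β) (u : α) (v : β) :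
    0 ≤ jointP P U V u v := by
  rw [jointP_eq_probOf]
  exact probOf_nonneg hP _

theorem sum_jointP (P : Ω → ℝ) {V : Ω → β} {T : Finset β} (hT : ∀ ω, V ω ∈ T) (U : Ω → α)
    (u : α) :
    ∑ v ∈ T, jointP P U V u v = probOf P (fun ω => U ω = u) := by
  simp only [jointP_eq_probOf]
  exact sum_probOf_and_eq P hT _

theorem sum_sum_jointP [Fintype α] {P : Ω → ℝ} (hP1 : ∑ ω, P ω = 1) {V : Ω → β} {T : Finset β}
    (hT : ∀ ω, V ω ∈ T) (U : Ω → α) : ∑ u, ∑ v ∈ T, jointP P U V u v = 1 := by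
  simp only [sum_jointP P hT]
  have h := sum_probOf_and_eq P (fun ω => mem_univ (U ω)) fun _ => True
  simp only [true_and] at h
  rw [h, probOf_true, hP1]

theorem MIr_eq_mutualInfoOn [Fintype α] (P : Ω → ℝ) (U : Ω → α) {V : Ω → ℝ} {T : Finset ℝ}
    (hT : ∀ ω, V ω ∈ T) : MIr P U V = mutualInfoOn T (jointP P U V) := by
  refine mutualInfoOn_of_subset (fun z hz => ?_) fun u z _ hz => ?_
  · obtain ⟨ω, -, rfl⟩ := mem_image.1 hz
    exact hT ω
  · rw [jointP_eq_probOf]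
    exact probOf_eq_zero P fun ω ⟨_, hV⟩ => hz (hV ▸ mem_image_of_mem V (mem_univ ω))

theorem MIr_le_of_jointP_eq_mul [Fintype α] {P : Ω → ℝ} (hP : ∀ ω, 0 ≤ P ω) (hP1 : ∑ ω, P ω = 1)
    {U : Ω → α} {V V' : Ω → ℝ} {θ : ℝ} (hθ0 : 0 ≤ θ) (hθ1 : θ ≤ 1)
    (h : ∀ u z, z ≠ 0 → jointP P U V' u z = θ * jointP P U V u z) :
    MIr P U V' ≤ MIr P U V := by
  set T := insert 0 (image V univ ∪ image V' univ)
  have hV : ∀ ω, V ω ∈ T := fun ω => by simp [T]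
  have hV' : ∀ ω, V' ω ∈ T := fun ω => by simp [T]
  rw [MIr_eq_mutualInfoOn P U hV, MIr_eq_mutualInfoOn P U hV']
  refine mutualInfoOn_erase_le (mem_insert_self 0 _) (jointP_nonneg hP U V)
    (sum_sum_jointP hP1 hV U) hθ0 hθ1 fun u z hz => ?_
  rcases eq_or_ne z 0 with rfl | hz0
  · have hrow := (sum_jointP P hV' U u).trans (sum_jointP P hV U u).symm
    have hrest : ∑ z ∈ T.erase 0, jointP P U V' u z = θ * ∑ z ∈ T.erase 0, jointP P U V u z := by
      rw [mul_sum]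
      exact sum_congr rfl fun z hz => h u z (ne_of_mem_erase hz)
    rw [← add_sum_erase T _ hz, ← add_sum_erase T _ hz, hrest] at hrow
    rw [if_pos rfl, ← add_sum_erase T _ hz]
    linear_combination hrow
  · rw [if_neg hz0, h u z hz0]
    ring

end JointLaw

theorem Finset.restrict_eq_comp_val_iff {ι β : Type*} {s : Finset ι} {f g : ι → β} :
    s.restrict f = g ∘ Subtype.val ↔ ∀ i ∈ s, f i = g i := by
  simp [funext_iff]

theorem prod_mul_eq_iff_of_forall_eq_zero_or_eq_one {ι R : Type*} [CommMonoidWithZero R]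
    {s : Finset ι} {f : ι → R} (hf : ∀ i ∈ s, f i = 0 ∨ f i = 1) {x z : R} (hz : z ≠ 0) :
    (∏ i ∈ s, f i) * x = z ↔ (∀ i ∈ s, f i = 1) ∧ x = z := by
  by_cases hall : ∀ i ∈ s, f i = 1
  · rw [prod_eq_one hall, one_mul]
    exact ⟨fun h => ⟨hall, h⟩, And.right⟩
  · obtain ⟨i, hi, hi1⟩ := not_forall₂.1 hall
    rw [prod_eq_zero hi ((hf i hi).resolve_right hi1), zero_mul]
    exact iff_of_false hz.symm fun h => hall h.1

section MaskedChannels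

variable {Ω 𝒴 ι β : Type*} [Fintype Ω] [Nonempty β] (P : Ω → ℝ) (Y : Ω → 𝒴)

theorem probOf_eq_of_exchangeable (Zt : ι → Ω → β) (I : Finset ι)
    (hexch : ∀ σ : Equiv.Perm ι, (∀ j, j ∉ I → σ j = j) → ∀ (y : 𝒴) (v : ι → β),
      probOf P (fun ω => Y ω = y ∧ ∀ k ∈ I, Zt (σ k) ω = v k) =
        probOf P (fun ω => Y ω = y ∧ ∀ k ∈ I, Zt k ω = v k))
    {i j : ι} (hi : i ∈ I) (hj : j ∈ I) (y : 𝒴) (z : β) :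
    probOf P (fun ω => Y ω = y ∧ Zt j ω = z) = probOf P (fun ω => Y ω = y ∧ Zt i ω = z) := by
  set σ := Equiv.swap i j
  have hσ : ∀ l, l ∉ I → σ l = l := fun l hl =>
    Equiv.swap_apply_of_ne_of_ne (ne_of_mem_of_not_mem hi hl).symm
      (ne_of_mem_of_not_mem hj hl).symm
  have h := probOf_and_comp_eq_mul P (X := fun ω => I.restrict fun k => Zt (σ k) ω)
    (X' := fun ω => I.restrict fun k => Zt k ω) (A := fun ω => Y ω = y) (c := 1)
    (fun e => by
      obtain ⟨v, rfl⟩ := Subtype.val_injective.surjective_comp_right e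
      simpa only [restrict_eq_comp_val_iff, one_mul] using hexch σ hσ y v)
    (fun e => e ⟨i, hi⟩ = z)
  simpa [σ] using h

theorem probOf_forall_eq_and_eq_mul {κ γ : Type*} [Nonempty γ] (ε : κ → Ω → γ)
    (Zt : ι → Ω → β) (J : Finset κ) (I : Finset ι)
    (hindep : ∀ (e : κ → γ) (y : 𝒴) (v : ι → β),
      probOf P (fun ω => (∀ i ∈ J, ε i ω = e i) ∧ Y ω = y ∧ ∀ k ∈ I, Zt k ω = v k) =
        probOf P (fun ω => ∀ i ∈ J, ε i ω = e i) *
          probOf P (fun ω => Y ω = y ∧ ∀ k ∈ I, Zt k ω = v k))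
    {s : Finset κ} (hs : s ⊆ J) (b : γ) {m : ι} (hm : m ∈ I) (y : 𝒴) (z : β) :
    probOf P (fun ω => (∀ i ∈ s, ε i ω = b) ∧ Y ω = y ∧ Zt m ω = z) =
      probOf P (fun ω => ∀ i ∈ s, ε i ω = b) * probOf P (fun ω => Y ω = y ∧ Zt m ω = z) := by
  have h := probOf_comp_and_comp_eq_mul P (X := fun ω => J.restrict fun i => ε i ω)
    (W := fun ω => I.restrict fun k => Zt k ω) (A := fun ω => Y ω = y)
    (fun e v => by
      obtain ⟨e, rfl⟩ := Subtype.val_injective.surjective_comp_right e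
      obtain ⟨v, rfl⟩ := Subtype.val_injective.surjective_comp_right v
      simpa only [restrict_eq_comp_val_iff] using hindep e y v)
    (fun e => ∀ i (hi : i ∈ s), e ⟨i, hs hi⟩ = b) (fun v => v ⟨m, hm⟩ = z)
  simpa using h

end MaskedChannels

theorem stmt_9_general {Ω 𝒴 : Type*} [Fintype Ω] [Fintype 𝒴]
    (K : ℕ)
    (P : Ω → ℝ) (hP : ∀ ω, 0 ≤ P ω) (hP1 : ∑ ω, P ω = 1)
    (Y : Ω → 𝒴) (Zt : ℕ → Ω → ℝ)
    (hexch : ∀ σ : Equiv.Perm ℕ, (∀ j, j ∉ Finset.Icc 1 K → σ j = j) →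
      ∀ (y : 𝒴) (v : ℕ → ℝ),
        (∑ ω, if Y ω = y ∧ ∀ k ∈ Finset.Icc 1 K, Zt (σ k) ω = v k then P ω else 0) =
          (∑ ω, if Y ω = y ∧ ∀ k ∈ Finset.Icc 1 K, Zt k ω = v k then P ω else 0))
    (ε : ℕ → Ω → ℝ)
    (hε01 : ∀ i ω, ε i ω = 0 ∨ ε i ω = 1)
    (hindep : ∀ (e : ℕ → ℝ) (y : 𝒴) (v : ℕ → ℝ),
      (∑ ω, if (∀ i ∈ Finset.Icc 1 (K - 1), ε i ω = e i) ∧ Y ω = y ∧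
          (∀ k ∈ Finset.Icc 1 K, Zt k ω = v k) then P ω else 0) =
        (∑ ω, if (∀ i ∈ Finset.Icc 1 (K - 1), ε i ω = e i) then P ω else 0) *
          (∑ ω, if Y ω = y ∧ (∀ k ∈ Finset.Icc 1 K, Zt k ω = v k) then P ω else 0))
    (Z : ℕ → Ω → ℝ)
    (hZ : ∀ k ω, Z k ω = (∏ j ∈ Finset.Ico 1 k, ε j ω) * Zt k ω) :
    ∀ k, 1 ≤ k → k < K → MIr P Y (Z (k + 1)) ≤ MIr P Y (Z k) := by
  intro k hk hkK
  set mask : ℕ → ℝ := fun m => probOf P fun ω => ∀ i ∈ Ico 1 m, ε i ω = 1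
  have hjoint : ∀ m, 1 ≤ m → m ≤ K → ∀ y z, z ≠ 0 →
      jointP P Y (Z m) y z = mask m * probOf P (fun ω => Y ω = y ∧ Zt m ω = z) := by
    intro m hm hmK y z hz
    -- `convert` reconciles the `Decidable` instances of the `if`s in `hindep` with `probOf`'s
    rw [jointP_eq_probOf, ← probOf_forall_eq_and_eq_mul P Y ε Zt (Icc 1 (K - 1)) (Icc 1 K)
      (fun e y v => by unfold probOf; convert hindep e y v)
      (fun i hi => by simp at hi ⊢; omega) 1 (by simp; omega)]
    refine probOf_congr P fun ω => ?_
    rw [hZ, prod_mul_eq_iff_of_forall_eq_zero_or_eq_one (fun i _ => hε01 i ω) hz]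
    tauto
  have hmask : mask (k + 1) ≤ mask k :=
    probOf_mono hP fun ω h i hi => h i (Ico_subset_Ico_right k.le_succ hi)
  refine MIr_le_of_jointP_eq_mul hP hP1 (div_nonneg (probOf_nonneg hP _) (probOf_nonneg hP _))
    (div_le_one_of_le₀ hmask (probOf_nonneg hP _)) fun y z hz => ?_
  rw [hjoint (k + 1) (by omega) hkK y z hz, hjoint k hk hkK.le y z hz, ← mul_assoc,
    div_mul_cancel_of_imp fun h => le_antisymm (h ▸ hmask) (probOf_nonneg hP _),
    probOf_eq_of_exchangeable P Y Zt (Icc 1 K)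
      (fun σ hσ y v => by unfold probOf; convert hexch σ hσ y v) (i := k) (j := k + 1)
      (by simp; omega) (by simp; omega)]

/-- Nested Dropout information ordering (Theorem 2(ii)): with exchangeable
channels `Z̃_1, ..., Z̃_K`, an independent stopping chain of Bernoulli masks
`ε_1, ..., ε_{K-1}`, and masked channels `Z_k = (∏_{j=1}^{k-1} ε_j) Z̃_k`,
the mutual informations are ordered: `I(Y; Z_1) ≥ I(Y; Z_2) ≥ ... ≥ I(Y; Z_K)`. -/
theorem stmt_9 {Ω 𝒴 : Type*} [Fintype Ω] [Fintype 𝒴]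
    (K : ℕ) (hK : 2 ≤ K)
    (P : Ω → ℝ) (hP : ∀ ω, 0 ≤ P ω) (hP1 : ∑ ω, P ω = 1)
    (Y : Ω → 𝒴) (Zt : ℕ → Ω → ℝ)
    (hexch : ∀ σ : Equiv.Perm ℕ, (∀ j, j ∉ Finset.Icc 1 K → σ j = j) →
      ∀ (y : 𝒴) (v : ℕ → ℝ),
        (∑ ω, if Y ω = y ∧ ∀ k ∈ Finset.Icc 1 K, Zt (σ k) ω = v k then P ω else 0) =
          (∑ ω, if Y ω = y ∧ ∀ k ∈ Finset.Icc 1 K, Zt k ω = v k then P ω else 0))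
    (ε : ℕ → Ω → ℝ) (η : ℕ → ℝ)
    (hε0 : ∀ ω, ε 0 ω = 1)
    (hε01 : ∀ i ω, ε i ω = 0 ∨ ε i ω = 1)
    (hchain : ∀ i ω, 1 ≤ i → ε i ω = 1 → ε (i - 1) ω = 1)
    (hBer : ∀ i, 1 ≤ i → i ≤ K - 1 →
      (∑ ω, if ε i ω = 1 ∧ ε (i - 1) ω = 1 then P ω else 0) =
        η i * ∑ ω, if ε (i - 1) ω = 1 then P ω else 0)
    (hindep : ∀ (e : ℕ → ℝ) (y : 𝒴) (v : ℕ → ℝ),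
      (∑ ω, if (∀ i ∈ Finset.Icc 1 (K - 1), ε i ω = e i) ∧ Y ω = y ∧
          (∀ k ∈ Finset.Icc 1 K, Zt k ω = v k) then P ω else 0) =
        (∑ ω, if (∀ i ∈ Finset.Icc 1 (K - 1), ε i ω = e i) then P ω else 0) *
          (∑ ω, if Y ω = y ∧ (∀ k ∈ Finset.Icc 1 K, Zt k ω = v k) then P ω else 0))
    (Z : ℕ → Ω → ℝ)
    (hZ : ∀ k ω, Z k ω = (∏ j ∈ Finset.Ico 1 k, ε j ω) * Zt k ω) :
    ∀ k, 1 ≤ k → k < K → MIr P Y (Z (k + 1)) ≤ MIr P Y (Z k) :=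
  stmt_9_general K P hP hP1 Y Zt hexch ε hε01 hindep Z hZ

end
end
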